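/- arXiv:2410.24191 — 8 statements merged into one kernel-verified Lean document; each statement's English description precedes it below -/
import Mathlib

section
/- Let p^M be the least maximizer of p ↦ p·F̄(p) over [0,∞) and r^M := p^M·F̄(p^M). Suppose 0 ≤ p̲ ≤ p ≤ p^M and p·F̄(p̲) ≥ r^M. Define T(x) := p for x ∈ [p̲, p) and T(x) := x otherwise, and let ν := T_#μ be the pushforward of μ under T. Then ν([p,∞)) = F̄(p̲) and p'·ν([p',∞)) ≤ p·F̄(p̲) for every p' ≥ 0; that is, p is an optimal posted price against the transformed demand ν. -/
open MeasureTheory Set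

noncomputable section

/-- Survival function of a Borel measure on the reals: `F̄(x) = ν([x,∞))`. -/
def surv (ν : Measure ℝ) (x : ℝ) : ℝ := (ν (Ici x)).toReal

/-- The intermediate-interval map `T_{p̲,p}`. -/
def intervalMap (plow p : ℝ) (x : ℝ) : ℝ :=
  if plow ≤ x ∧ x < p then p else x

lemma measurable_intervalMap (plow p : ℝ) : Measurable (intervalMap plow p) := by
  unfold intervalMap
  exact Measurable.ite measurableSet_Ico measurable_const measurable_id

lemma pre_low {plow p p' : ℝ} (h1 : plow ≤ p) (h : p' ≤ plow) :
    intervalMap plow p ⁻¹' Ici p' = Ici p' := by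
  ext x
  simp only [mem_preimage, mem_Ici, intervalMap]
  split_ifs with hx
  · constructor
    · intro _; linarith [hx.1]
    · intro _; linarith
  · rfl

lemma pre_mid {plow p p' : ℝ} (h1 : plow ≤ p') (h2 : p' ≤ p) :
    intervalMap plow p ⁻¹' Ici p' = Ici plow := by
  ext x
  simp only [mem_preimage, mem_Ici, intervalMap]
  split_ifs with hx
  · constructor
    · intro _; exact hx.1
    · intro _; exact h2
  · push_neg at hx
    constructor
    · intro h; linarith
    · intro h; linarith [hx h]

lemma pre_high {plow p p' : ℝ} (h : p < p') :
    intervalMap plow p ⁻¹' Ici p' = Ici p' := by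
  ext x
  simp only [mem_preimage, mem_Ici, intervalMap]
  split_ifs with hx
  · constructor
    · intro hh; linarith
    · intro hh; linarith [hx.2]
  · rfl

lemma surv_map (μ : Measure ℝ) (plow p p' : ℝ) :
    surv (μ.map (intervalMap plow p)) p' = (μ (intervalMap plow p ⁻¹' Ici p')).toReal := by
  rw [surv, Measure.map_apply (measurable_intervalMap plow p) measurableSet_Ici]

/-- If `p̲ ≤ p ≤ p^M` and `p·F̄(p̲) ≥ r^M`, then against the demand transformed by the
intermediate-interval map `T_{p̲,p}`, the quantity sold at `p` is `F̄(p̲)` and `p` is an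
optimal posted price. -/
theorem stmt2
    (μ : Measure ℝ) (hprob : IsProbabilityMeasure μ) (hatom : ∀ x : ℝ, μ {x} = 0)
    (hnn : μ (Iio 0) = 0) (hmean : Integrable id μ)
    (pM : ℝ) (hpM0 : 0 ≤ pM)
    (hpMmax : ∀ r, 0 ≤ r → r * surv μ r ≤ pM * surv μ pM)
    (hpMleast : ∀ r, 0 ≤ r → (∀ r', 0 ≤ r' → r' * surv μ r' ≤ r * surv μ r) → pM ≤ r)
    (plow p : ℝ) (h0 : 0 ≤ plow) (h1 : plow ≤ p) (h2 : p ≤ pM)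
    (hrev : pM * surv μ pM ≤ p * surv μ plow) :
    surv (μ.map (intervalMap plow p)) p = surv μ plow ∧
    ∀ p', 0 ≤ p' → p' * surv (μ.map (intervalMap plow p)) p' ≤ p * surv μ plow := by
  constructor
  · rw [surv_map, pre_mid h1 le_rfl]; rfl
  · intro p' hp'
    rcases le_or_gt p' plow with hc | hc
    · rw [surv_map, pre_low h1 hc]
      calc p' * surv μ p' ≤ pM * surv μ pM := hpMmax p' hp'
        _ ≤ p * surv μ plow := hrev
    rcases le_or_gt p' p with hc2 | hc2
    · rw [surv_map, pre_mid hc.le hc2]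
      exact mul_le_mul_of_nonneg_right hc2 ENNReal.toReal_nonneg
    · rw [surv_map, pre_high hc2]
      calc p' * surv μ p' ≤ pM * surv μ pM := hpMmax p' hp'
        _ ≤ p * surv μ plow := hrev
end
end

section
/- Let p > 0 and q ∈ (0,1] satisfy p·q ≥ sup_{p'≥0} p'·F̄(p'). Let T : [0,∞) → [0,∞) be a nondecreasing Borel map such that T(x) = x whenever F̄(x) > q, and such that T(x) ≥ p and T(x)·F̄(x) ≤ p·q whenever F̄(x) ≤ q. Then, with ν := T_#μ: p'·ν([p',∞)) ≤ p·q for every p' ≥ 0, and p·ν([p,∞)) = p·q; in particular, p is an optimal posted price against ν with revenue p·q. -/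
open MeasureTheory Set

noncomputable section

section aux

variable {μ : Measure ℝ} [IsProbabilityMeasure μ]

lemma surv_nonneg (μ : Measure ℝ) (x : ℝ) : 0 ≤ surv μ x := ENNReal.toReal_nonneg

lemma surv_antitone (μ : Measure ℝ) [IsProbabilityMeasure μ] : Antitone (surv μ) := by
  intro a b hab
  exact ENNReal.toReal_mono (measure_ne_top μ _) (measure_mono (Ici_subset_Ici.2 hab))

lemma measure_Ici_le_iff {x c : ℝ} (hc : 0 ≤ c) :
    μ (Ici x) ≤ ENNReal.ofReal c ↔ surv μ x ≤ c :=
  ENNReal.le_ofReal_iff_toReal_le (measure_ne_top μ _) hc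

lemma surv_le_one (x : ℝ) : surv μ x ≤ 1 := by
  have : μ (Ici x) ≤ ENNReal.ofReal 1 := by
    rw [ENNReal.ofReal_one]; exact prob_le_one
  exact (measure_Ici_le_iff zero_le_one).1 this

lemma surv_zero (hnn : μ (Iio 0) = 0) : surv μ 0 = 1 := by
  have h := measure_add_measure_compl (μ := μ) (measurableSet_Ici (a := (0:ℝ)))
  rw [compl_Ici, hnn, add_zero, measure_univ] at h
  rw [surv, h, ENNReal.toReal_one]

lemma surv_set_subset_Ioi (hnn : μ (Iio 0) = 0) {c : ℝ} (hc : c < 1) :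
    {x : ℝ | surv μ x ≤ c} ⊆ Ioi 0 := by
  intro x hx
  by_contra h
  simp only [mem_Ioi, not_lt] at h
  have h1 : (1:ℝ) ≤ surv μ x := by
    rw [← surv_zero hnn]
    exact surv_antitone μ h
  have : surv μ x ≤ c := hx
  linarith

lemma meas_surv_le_le (hatom : ∀ x : ℝ, μ {x} = 0) (hnn : μ (Iio 0) = 0)
    {c : ℝ} (hc : 0 < c) (hex : ∃ x, surv μ x ≤ c) :
    μ {x | surv μ x ≤ c} ≤ ENNReal.ofReal c := by
  by_cases h1 : 1 ≤ c
  · calc μ {x | surv μ x ≤ c} ≤ 1 := prob_le_one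
      _ ≤ ENNReal.ofReal c := by
          rw [← ENNReal.ofReal_one]; exact ENNReal.ofReal_le_ofReal h1
  · push_neg at h1
    set S := {x : ℝ | surv μ x ≤ c} with hS
    have hSI : S ⊆ Ioi 0 := surv_set_subset_Ioi hnn h1
    have hbdd : BddBelow S := ⟨0, fun x hx => le_of_lt (hSI hx)⟩
    have hne : S.Nonempty := hex
    set y := sInf S with hy
    have hsub : S ⊆ Ici y := fun x hx => csInf_le hbdd hx
    have key : ∀ n : ℕ, μ (Ici (y + 1/((n:ℝ)+1))) ≤ ENNReal.ofReal c := by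
      intro n
      have hpos : (0:ℝ) < 1/((n:ℝ)+1) := by positivity
      obtain ⟨s, hsS, hs⟩ := (csInf_lt_iff hbdd hne).mp
        (by linarith : sInf S < y + 1/((n:ℝ)+1))
      calc μ (Ici (y + 1/((n:ℝ)+1))) ≤ μ (Ici s) :=
            measure_mono (Ici_subset_Ici.2 hs.le)
        _ ≤ ENNReal.ofReal c := (measure_Ici_le_iff hc.le).2 hsS
    have hIoi : Ioi y = ⋃ n : ℕ, Ici (y + 1/((n:ℝ)+1)) := by
      ext x
      simp only [mem_Ioi, mem_iUnion, mem_Ici]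
      constructor
      · intro hx
        obtain ⟨n, hn⟩ := exists_nat_one_div_lt (by linarith : (0:ℝ) < x - y)
        exact ⟨n, by push_cast at hn ⊢; linarith⟩
      · rintro ⟨n, hn⟩
        have : (0:ℝ) < 1/((n:ℝ)+1) := by positivity
        linarith
    have hdir : Directed (· ⊆ ·) (fun n : ℕ => Ici (y + 1/((n:ℝ)+1))) := by
      apply Monotone.directed_le
      intro n m hnm
      apply Ici_subset_Ici.2
      have hcast : (n:ℝ) ≤ (m:ℝ) := Nat.cast_le.2 hnm
      have : (1:ℝ)/((m:ℝ)+1) ≤ 1/((n:ℝ)+1) :=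
        one_div_le_one_div_of_le (by positivity) (by linarith)
      linarith
    have hmIoi : μ (Ioi y) ≤ ENNReal.ofReal c := by
      rw [hIoi, hdir.measure_iUnion]
      exact iSup_le key
    calc μ S ≤ μ (Ici y) := measure_mono hsub
      _ = μ ({y} ∪ Ioi y) := by rw [← Set.insert_eq, Set.Ioi_insert]
      _ ≤ μ {y} + μ (Ioi y) := measure_union_le _ _
      _ = μ (Ioi y) := by rw [hatom y, zero_add]
      _ ≤ ENNReal.ofReal c := hmIoi

lemma meas_surv_le_ge (hatom : ∀ x : ℝ, μ {x} = 0) (hnn : μ (Iio 0) = 0)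
    {c : ℝ} (hc : 0 < c) (hc1 : c ≤ 1) (hex : ∃ x, surv μ x ≤ c) :
    ENNReal.ofReal c ≤ μ {x | surv μ x ≤ c} := by
  rcases eq_or_lt_of_le hc1 with h1 | h1
  · have huniv : {x : ℝ | surv μ x ≤ c} = univ :=
      eq_univ_of_forall fun x => by rw [mem_setOf, h1]; exact surv_le_one x
    rw [huniv, measure_univ]
    exact ENNReal.ofReal_le_one.2 hc1
  · set S := {x : ℝ | surv μ x ≤ c} with hS
    have hup : ∀ a b : ℝ, a ∈ S → a ≤ b → b ∈ S := fun a b ha hab =>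
      le_trans (surv_antitone μ hab) ha
    have hSI : S ⊆ Ioi 0 := surv_set_subset_Ioi hnn h1
    have hbdd : BddBelow S := ⟨0, fun x hx => le_of_lt (hSI hx)⟩
    have hne : S.Nonempty := hex
    set y := sInf S with hy
    have hsup : Ioi y ⊆ S := by
      intro z hz
      obtain ⟨s, hsS, hs⟩ := (csInf_lt_iff hbdd hne).mp hz
      exact hup s z hsS hs.le
    have key : ∀ n : ℕ, ENNReal.ofReal c ≤ μ (Ici (y - 1/((n:ℝ)+1))) := by
      intro n
      have hpos : (0:ℝ) < 1/((n:ℝ)+1) := by positivity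
      have hnotS : y - 1/((n:ℝ)+1) ∉ S := by
        intro h
        have := csInf_le hbdd h
        rw [← hy] at this
        linarith
      have hlt : c < surv μ (y - 1/((n:ℝ)+1)) := lt_of_not_ge hnotS
      calc ENNReal.ofReal c ≤ ENNReal.ofReal (surv μ (y - 1/((n:ℝ)+1))) :=
            ENNReal.ofReal_le_ofReal hlt.le
        _ = μ (Ici (y - 1/((n:ℝ)+1))) := by
            rw [surv, ENNReal.ofReal_toReal (measure_ne_top μ _)]
    have hIci : Ici y = ⋂ n : ℕ, Ici (y - 1/((n:ℝ)+1)) := by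
      ext x
      simp only [mem_Ici, mem_iInter]
      constructor
      · intro hx n
        have : (0:ℝ) < 1/((n:ℝ)+1) := by positivity
        linarith
      · intro hx
        by_contra h
        push_neg at h
        obtain ⟨n, hn⟩ := exists_nat_one_div_lt (by linarith : (0:ℝ) < y - x)
        have := hx n
        push_cast at hn this
        linarith
    have hdir : Directed (· ⊇ ·) (fun n : ℕ => Ici (y - 1/((n:ℝ)+1))) := by
      apply Antitone.directed_ge
      intro n m hnm
      apply Ici_subset_Ici.2
      have hcast : (n:ℝ) ≤ (m:ℝ) := Nat.cast_le.2 hnm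
      have : (1:ℝ)/((m:ℝ)+1) ≤ 1/((n:ℝ)+1) :=
        one_div_le_one_div_of_le (by positivity) (by linarith)
      linarith
    have hIciy : ENNReal.ofReal c ≤ μ (Ici y) := by
      rw [hIci, hdir.measure_iInter (fun n => measurableSet_Ici.nullMeasurableSet)
        ⟨0, measure_ne_top μ _⟩]
      exact le_iInf key
    calc ENNReal.ofReal c ≤ μ (Ici y) := hIciy
      _ = μ ({y} ∪ Ioi y) := by rw [← Set.insert_eq, Set.Ioi_insert]
      _ ≤ μ {y} + μ (Ioi y) := measure_union_le _ _
      _ = μ (Ioi y) := by rw [hatom y, zero_add]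
      _ ≤ μ S := measure_mono hsup

lemma meas_inter_Ici (hnn : μ (Iio 0) = 0) (A : Set ℝ) : μ A ≤ μ (A ∩ Ici 0) := by
  calc μ A ≤ μ ((A ∩ Ici 0) ∪ Iio 0) := by
        apply measure_mono
        intro x hx
        by_cases h : 0 ≤ x
        · exact Or.inl ⟨hx, h⟩
        · exact Or.inr (lt_of_not_ge h)
    _ ≤ μ (A ∩ Ici 0) + μ (Iio 0) := measure_union_le _ _
    _ = μ (A ∩ Ici 0) := by rw [hnn, add_zero]

end aux

/-- If `p·q` dominates all no-advertising revenues, `T` is nondecreasing with `T(x) = x`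
whenever `F̄(x) > q`, and `T(x) ≥ p`, `T(x)·F̄(x) ≤ p·q` whenever `F̄(x) ≤ q`, then `p` is
an optimal posted price against `ν = T_#μ`, with revenue exactly `p·q`. -/
theorem stmt6
    (μ : Measure ℝ) (hprob : IsProbabilityMeasure μ) (hatom : ∀ x : ℝ, μ {x} = 0)
    (hnn : μ (Iio 0) = 0) (hmean : Integrable id μ)
    (p : ℝ) (hp : 0 < p) (q : ℝ) (hq : q ∈ Ioc (0 : ℝ) 1)
    (hpq : ∀ p', 0 ≤ p' → p' * surv μ p' ≤ p * q)
    (T : ℝ → ℝ) (hTmono : Monotone T) (hTmeas : Measurable T)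
    (hTnn : ∀ x, 0 ≤ x → 0 ≤ T x)
    (hid : ∀ x, 0 ≤ x → q < surv μ x → T x = x)
    (hshift : ∀ x, 0 ≤ x → surv μ x ≤ q → p ≤ T x ∧ T x * surv μ x ≤ p * q) :
    (∀ p', 0 ≤ p' → p' * surv (μ.map T) p' ≤ p * q) ∧
    p * surv (μ.map T) p = p * q := by
  haveI := hprob
  obtain ⟨hq0, hq1⟩ := hq
  have hpq0 : 0 < p * q := mul_pos hp hq0
  have hmap : ∀ r : ℝ, (μ.map T) (Ici r) = μ (T ⁻¹' Ici r) := fun r =>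
    Measure.map_apply hTmeas measurableSet_Ici
  -- Part 1
  have part1 : ∀ p', 0 ≤ p' → p' * surv (μ.map T) p' ≤ p * q := by
    intro p' hp'
    rcases eq_or_lt_of_le hp' with h0 | h0
    · rw [← h0, zero_mul]; exact hpq0.le
    · set c := p * q / p' with hc
      have hc0 : 0 < c := by positivity
      have hsubset : T ⁻¹' Ici p' ∩ Ici 0 ⊆ {x | surv μ x ≤ c} := by
        rintro x ⟨hx1, hx2⟩
        rw [mem_preimage, mem_Ici] at hx1
        rw [mem_Ici] at hx2
        rw [mem_setOf, hc, le_div_iff₀ h0]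
        by_cases hcase : q < surv μ x
        · have hTx := hid x hx2 hcase
          rw [hTx] at hx1
          have hmono : surv μ x ≤ surv μ p' := surv_antitone μ hx1
          have h2 := hpq p' hp'
          nlinarith [surv_nonneg μ x]
        · push_neg at hcase
          obtain ⟨hT1, hT2⟩ := hshift x hx2 hcase
          nlinarith [surv_nonneg μ x]
      have hex : ∃ x, surv μ x ≤ c := by
        refine ⟨p * q / c, ?_⟩
        have hr : 0 < p * q / c := by positivity
        have h2 := hpq _ hr.le
        have heq : (p * q / c) * c = p * q := by field_simp
        by_contra h
        push_neg at h
        nlinarith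
      have hle : μ (T ⁻¹' Ici p') ≤ ENNReal.ofReal c :=
        calc μ (T ⁻¹' Ici p') ≤ μ (T ⁻¹' Ici p' ∩ Ici 0) := meas_inter_Ici hnn _
          _ ≤ μ {x | surv μ x ≤ c} := measure_mono hsubset
          _ ≤ ENNReal.ofReal c := meas_surv_le_le hatom hnn hc0 hex
      have hsurv : surv (μ.map T) p' ≤ c := by
        rw [surv, hmap]
        exact ENNReal.toReal_le_of_le_ofReal hc0.le hle
      calc p' * surv (μ.map T) p' ≤ p' * c :=
            mul_le_mul_of_nonneg_left hsurv h0.le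
        _ = p * q := by rw [hc]; field_simp
  refine ⟨part1, ?_⟩
  -- Part 2 : upper bound
  have hupper : surv (μ.map T) p ≤ q :=
    le_of_mul_le_mul_left (part1 p hp.le) hp
  -- Part 2 : lower bound
  have hexq : ∃ x, surv μ x ≤ q := by
    refine ⟨p, ?_⟩
    have := hpq p hp.le
    exact le_of_mul_le_mul_left this hp
  have hsubset2 : {x | surv μ x ≤ q} ∩ Ici 0 ⊆ T ⁻¹' Ici p := by
    rintro x ⟨hx1, hx2⟩
    rw [mem_setOf] at hx1
    rw [mem_Ici] at hx2
    rw [mem_preimage, mem_Ici]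
    exact (hshift x hx2 hx1).1
  have hge : ENNReal.ofReal q ≤ μ (T ⁻¹' Ici p) :=
    calc ENNReal.ofReal q ≤ μ {x | surv μ x ≤ q} :=
          meas_surv_le_ge hatom hnn hq0 hq1 hexq
      _ ≤ μ ({x | surv μ x ≤ q} ∩ Ici 0) := meas_inter_Ici hnn _
      _ ≤ μ (T ⁻¹' Ici p) := measure_mono hsubset2
  have hlower : q ≤ surv (μ.map T) p := by
    rw [surv, hmap]
    have := ENNReal.toReal_mono (measure_ne_top μ _) hge
    rwa [ENNReal.toReal_ofReal hq0.le] at this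
  rw [le_antisymm hupper hlower]

end
end

section
/- Suppose min X < p̲ < p* and min X < p̲^U < p^U satisfy: (FOC-u) F̄(p̲) = ∫_{p̲}^{p*} c_d′(p* − x) f(x) dx; (FOC-l) c_d(p* − p̲) = p*; (U-FOC-u) F̄(p̲^U) = c_d′(p^U − p̲^U); and (U-FOC-l) p^U·f(p̲^U) = c_d′(p^U − p̲^U). Then the monopoly prices are ordered: p^M ≤ p^U < p*. -/
open MeasureTheory Set

noncomputable section

/-- Comparison of monopoly prices: if `(p̲,p*)` satisfies the producer-optimal
targeted-advertising first-order conditions and `(p̲^U,p^U)` the uniform-advertising ones,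
then `p^M ≤ p^U < p*`. -/
theorem stmt7
    (μ : Measure ℝ) (hprob : IsProbabilityMeasure μ) (hatom : ∀ x : ℝ, μ {x} = 0)
    (hmean : Integrable id μ) (hnn : μ (Iio 0) = 0)
    (X : Set ℝ) (hXc : IsClosed X) (hXi : X.OrdConnected) (hXnn : X ⊆ Ici 0)
    (hsupp : μ Xᶜ = 0)
    (f : ℝ → ℝ) (hfc : Continuous f)
    (hdens : μ = (volume : Measure ℝ).withDensity fun x => ENNReal.ofReal (f x))
    (hfpos : ∀ x ∈ interior X, 0 < f x)
    (hfdec : AntitoneOn f (interior X))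
    (hhaz : MonotoneOn (fun x => f x / surv μ x) (interior X))
    (pM : ℝ) (hpM0 : 0 ≤ pM)
    (hpMmax : ∀ r, 0 ≤ r → r * surv μ r ≤ pM * surv μ pM)
    (hpMfoc : pM * f pM = surv μ pM)
    (cd cd' : ℝ → ℝ) (hcd0 : cd 0 = 0) (hcdnn : ∀ t, 0 ≤ t → 0 ≤ cd t)
    (hderiv : ∀ t, 0 ≤ t → HasDerivWithinAt cd (cd' t) (Ici 0) t)
    (hcd'cont : ContinuousOn cd' (Ici 0))
    (hcd'0 : cd' 0 = 0) (hcd'mono : StrictMonoOn cd' (Ici 0))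
    (plow pstar plowU pU : ℝ)
    (h1 : sInf X < plow) (h2 : plow < pstar)
    (h3 : sInf X < plowU) (h4 : plowU < pU)
    (hFOCu : surv μ plow = ∫ x in plow..pstar, cd' (pstar - x) * f x)
    (hFOCl : cd (pstar - plow) = pstar)
    (hUFOCu : surv μ plowU = cd' (pU - plowU))
    (hUFOCl : pU * f plowU = cd' (pU - plowU)) :
    pM ≤ pU ∧ pU < pstar := by
  -- basic facts about X
  have hXne : X.Nonempty := by
    rcases eq_empty_or_nonempty X with h | h
    · exfalso
      have : μ (univ : Set ℝ) = 0 := by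
        have := hsupp
        rwa [h, compl_empty] at this
      rw [measure_univ] at this
      exact one_ne_zero this
    · exact h
  have hbdd : BddBelow X := ⟨0, fun x hx => hXnn hx⟩
  have hInfmem : sInf X ∈ X := hXc.csInf_mem hXne hbdd
  have hInf0 : (0 : ℝ) ≤ sInf X := hXnn hInfmem
  -- survival function basics
  have hfin : ∀ s : Set ℝ, μ s ≠ ⊤ := fun s => (measure_lt_top μ s).ne
  have hanti : Antitone (surv μ) := fun a b hab =>
    ENNReal.toReal_mono (hfin _) (measure_mono (Ici_subset_Ici.2 hab))
  have hsurv_le_one : ∀ x, surv μ x ≤ 1 := by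
    intro x
    have h : μ (Ici x) ≤ μ univ := measure_mono (subset_univ _)
    rw [measure_univ] at h
    have := ENNReal.toReal_mono (by simp) h
    simpa [surv] using this
  have hsurv0 : ∀ x, 0 ≤ surv μ x := fun x => ENNReal.toReal_nonneg
  -- density positivity lemma
  have hdenspos : ∀ a b c : ℝ, 0 < c → a < b → (∀ x ∈ Ioo a b, c ≤ f x) →
      0 < μ (Ioo a b) := by
    intro a b c hc hab hcf
    rw [hdens, withDensity_apply _ measurableSet_Ioo]
    have hle : ENNReal.ofReal c * volume (Ioo a b)
        ≤ ∫⁻ x in Ioo a b, ENNReal.ofReal (f x) := by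
      rw [← setLIntegral_const]
      exact setLIntegral_mono (ENNReal.measurable_ofReal.comp hfc.measurable)
        (fun x hx => ENNReal.ofReal_le_ofReal (hcf x hx))
    refine lt_of_lt_of_le ?_ hle
    rw [Real.volume_Ioo]
    exact ENNReal.mul_pos (by simp [ENNReal.ofReal_pos, hc])
      (by simp [ENNReal.ofReal_pos]; linarith)
  -- Lemma M : no positive density point with an interval to the right outside X
  have hM : ∀ y b : ℝ, 0 < f y → y < b → ¬ (Ioo y b ⊆ Xᶜ) := by
    intro y b hfy hyb hsub
    obtain ⟨ε, hε, hball⟩ := Metric.continuousAt_iff.1 hfc.continuousAt (f y / 2) (by linarith)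
    set δ := min ε (b - y) with hδdef
    have hδ0 : 0 < δ := lt_min hε (by linarith)
    have hμ0 : μ (Ioo y (y + δ)) = 0 := by
      refine measure_mono_null ?_ hsupp
      intro x hx
      exact hsub ⟨hx.1, lt_of_lt_of_le hx.2 (by simp [hδdef]; linarith [min_le_right ε (b - y)])⟩
    have hμpos : 0 < μ (Ioo y (y + δ)) := by
      refine hdenspos y (y + δ) (f y / 2) (by linarith) (by linarith) ?_
      intro x hx
      have hdist : dist x y < ε := by
        rw [Real.dist_eq, abs_lt]
        constructor <;> [linarith [hx.1]; linarith [hx.2, min_le_left ε (b - y)]]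
      have := hball hdist
      rw [Real.dist_eq, abs_lt] at this
      linarith [this.1]
    exact absurd hμ0 hμpos.ne'
  -- Lemma A : positive density above the infimum means interior point
  have hA : ∀ y, sInf X < y → 0 < f y → y ∈ interior X := by
    intro y hy hfy
    obtain ⟨z, hzX, hzy⟩ : ∃ z ∈ X, y < z := by
      by_contra hcon
      push_neg at hcon
      refine hM y (y + 1) hfy (by linarith) ?_
      intro x hx hxX
      exact absurd (hcon x hxX) (not_le.2 hx.1)
    have hsub : Ioo (sInf X) z ⊆ X := fun w hw =>
      hXi.out hInfmem hzX ⟨hw.1.le, hw.2.le⟩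
    exact interior_maximal hsub isOpen_Ioo ⟨hy, hzy⟩
  have hIntInf : ∀ y ∈ interior X, sInf X < y := by
    intro y hy
    obtain ⟨ε, hε, hball⟩ := Metric.isOpen_iff.1 isOpen_interior y hy
    have hmem : y - ε / 2 ∈ X := by
      refine interior_subset (hball ?_)
      rw [Metric.mem_ball, Real.dist_eq]
      rw [abs_lt]
      constructor <;> linarith
    have := csInf_le hbdd hmem
    linarith
  -- Lemma B : f is bounded by its value at any interior point, to the right
  have hB : ∀ y ∈ interior X, ∀ x, y ≤ x → f x ≤ f y := by
    intro y hy x hyx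
    rcases eq_or_lt_of_le hyx with rfl | hlt
    · exact le_refl _
    by_cases hxi : x ∈ interior X
    · exact hfdec hy hxi hyx
    · have hx0 : f x ≤ 0 := by
        by_contra hcon
        push_neg at hcon
        exact hxi (hA x (lt_trans (hIntInf y hy) hlt) hcon)
      exact hx0.trans (hfpos y hy).le
  -- basic positivity for the uniform plan
  have hplU0 : 0 < plowU := lt_of_le_of_lt hInf0 h3
  have hpU0 : 0 < pU := hplU0.trans h4
  have htU0 : 0 < pU - plowU := by linarith
  have hcdtU : 0 < cd' (pU - plowU) := by
    have := hcd'mono (self_mem_Ici) (mem_Ici.2 htU0.le) htU0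
    rwa [hcd'0] at this
  have hsurvplU : 0 < surv μ plowU := by rw [hUFOCu]; exact hcdtU
  have hfplU : 0 < f plowU := by
    rcases lt_trichotomy (f plowU) 0 with h | h | h
    · nlinarith [hUFOCl]
    · rw [h] at hUFOCl; nlinarith [hUFOCl]
    · exact h
  have hplUint : plowU ∈ interior X := hA plowU h3 hfplU
  have hpUval : pU * f plowU = surv μ plowU := by rw [hUFOCl, ← hUFOCu]
  -- Part 1 : pM ≤ pU
  have part1 : pM ≤ pU := by
    rcases le_or_gt pM plowU with h | h
    · linarith
    · have hmax := hpMmax plowU hplU0.le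
      have hposprod : 0 < plowU * surv μ plowU := mul_pos hplU0 hsurvplU
      have hpMprod : 0 < pM * surv μ pM := lt_of_lt_of_le hposprod hmax
      have hpMpos : 0 < pM := by
        rcases lt_or_eq_of_le hpM0 with h' | h'
        · exact h'
        · exfalso; rw [← h'] at hpMprod; simp at hpMprod
      have hsurvpM : 0 < surv μ pM := by
        by_contra hcon
        push_neg at hcon
        nlinarith
      have hfpM : 0 < f pM := by nlinarith [hpMfoc]
      have hpMint : pM ∈ interior X := hA pM (h3.trans h) hfpM
      have hz := hhaz hplUint hpMint h.le
      simp only at hz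
      rw [div_le_div_iff₀ hsurvplU hsurvpM, ← hpMfoc, ← hpUval] at hz
      nlinarith [mul_pos hfpM hfplU]
  refine ⟨part1, ?_⟩
  -- Part 2 : pU < pstar
  have hpl0 : 0 < plow := lt_of_le_of_lt hInf0 h1
  have hts0 : 0 < pstar - plow := by linarith
  have hcdcont : ContinuousOn cd (Icc 0 (pstar - plow)) := fun x hx =>
    ((hderiv x hx.1).continuousWithinAt).mono Icc_subset_Ici_self
  have hcdAt : ∀ x ∈ Ioo (0 : ℝ) (pstar - plow), HasDerivAt cd (cd' x) x := fun x hx =>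
    (hderiv x hx.1.le).hasDerivAt (Ici_mem_nhds hx.1)
  obtain ⟨ξ, hξmem, hξ⟩ := exists_hasDerivAt_eq_slope cd cd' hts0 hcdcont hcdAt
  have hξval : cd' ξ = pstar / (pstar - plow) := by
    rw [hξ, hFOCl, hcd0, sub_zero, sub_zero]
  have hξgt1 : 1 < cd' ξ := by
    rw [hξval, lt_div_iff₀ hts0]; linarith
  have hcdts : 1 < cd' (pstar - plow) := by
    rcases eq_or_lt_of_le hξmem.2.le with h | h
    · rwa [← h]
    · exact lt_of_lt_of_le hξgt1
        (hcd'mono.monotoneOn (mem_Ici.2 hξmem.1.le) (mem_Ici.2 hts0.le) hξmem.2.le)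
  have hcdtUle : cd' (pU - plowU) ≤ 1 := by rw [← hUFOCu]; exact hsurv_le_one plowU
  have htUlt : pU - plowU < pstar - plow := by
    by_contra hcon
    push_neg at hcon
    have := hcd'mono.monotoneOn (mem_Ici.2 hts0.le) (mem_Ici.2 htU0.le) hcon
    linarith
  rcases le_or_gt plowU plow with hcase | hcase
  · linarith
  · -- plow < plowU
    have hplint : plow ∈ interior X := by
      have hsub : Ioo (sInf X) plowU ⊆ X := fun w hw =>
        hXi.out hInfmem (interior_subset hplUint) ⟨hw.1.le, hw.2.le⟩
      exact interior_maximal hsub isOpen_Ioo ⟨h1, hcase⟩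
    have hfpl : 0 < f plow := hfpos plow hplint
    -- the integral of cd' (pstar - x) over [plow, pstar] equals pstar
    have hcompcont : ContinuousOn (fun x => cd' (pstar - x)) (Icc plow pstar) := by
      refine hcd'cont.comp ((continuous_const.sub continuous_id).continuousOn) ?_
      intro x hx
      simp only [mem_Ici]
      simp only [mem_Icc] at hx
      linarith [hx.2]
    have hint1 : IntervalIntegrable (fun x => cd' (pstar - x) * f x) volume plow pstar :=
      (hcompcont.mul hfc.continuousOn).intervalIntegrable_of_Icc h2.le
    have hint2 : IntervalIntegrable (fun x => cd' (pstar - x) * f plow) volume plow pstar :=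
      (hcompcont.mul continuousOn_const).intervalIntegrable_of_Icc h2.le
    have hcdnonneg : ∀ x ∈ Icc plow pstar, 0 ≤ cd' (pstar - x) := by
      intro x hx
      have : cd' 0 ≤ cd' (pstar - x) :=
        hcd'mono.monotoneOn self_mem_Ici (mem_Ici.2 (by linarith [hx.2])) (by linarith [hx.2])
      rwa [hcd'0] at this
    have hIu : (∫ x in plow..pstar, cd' (pstar - x)) = pstar := by
      rw [intervalIntegral.integral_comp_sub_left (fun u => cd' u) pstar, sub_self]
      rw [intervalIntegral.integral_eq_sub_of_hasDeriv_right_of_le hts0.le hcdcont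
        (fun x hx => (hcdAt x hx).hasDerivWithinAt)
        ((hcd'cont.mono Icc_subset_Ici_self).intervalIntegrable_of_Icc hts0.le)]
      rw [hFOCl, hcd0, sub_zero]
    have key1 : surv μ plow ≤ pstar * f plow := by
      rw [hFOCu]
      have hmono : (∫ x in plow..pstar, cd' (pstar - x) * f x)
          ≤ ∫ x in plow..pstar, cd' (pstar - x) * f plow := by
        refine intervalIntegral.integral_mono_on h2.le hint1 hint2 ?_
        intro x hx
        exact mul_le_mul_of_nonneg_left (hB plow hplint x hx.1) (hcdnonneg x hx)
      calc (∫ x in plow..pstar, cd' (pstar - x) * f x)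
          ≤ ∫ x in plow..pstar, cd' (pstar - x) * f plow := hmono
        _ = (∫ x in plow..pstar, cd' (pstar - x)) * f plow :=
            intervalIntegral.integral_mul_const _ _
        _ = pstar * f plow := by rw [hIu]
    have hsurvpl : 0 < surv μ plow := lt_of_lt_of_le hsurvplU (hanti hcase.le)
    have hz2 := hhaz hplint hplUint hcase.le
    simp only at hz2
    rw [div_le_div_iff₀ hsurvpl hsurvplU] at hz2
    -- hz2 : f plow * surv μ plowU ≤ f plowU * surv μ plow
    have hple : pU ≤ pstar := by
      nlinarith [mul_pos hfpl hfplU, mul_le_mul_of_nonneg_left key1 hfplU.le, hz2, hpUval]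
    rcases lt_or_eq_of_le hple with hstrict | heq
    · exact hstrict
    · exfalso
      -- pU = pstar; derive contradiction
      have heq1 : surv μ plow = pstar * f plow := by
        refine le_antisymm key1 ?_
        have hsub : surv μ plowU = pstar * f plowU := by rw [← hpUval, heq]
        rw [hsub] at hz2
        have h'' : f plowU * (pstar * f plow) ≤ f plowU * surv μ plow := by
          calc f plowU * (pstar * f plow) = f plow * (pstar * f plowU) := by ring
            _ ≤ f plowU * surv μ plow := hz2
        exact le_of_mul_le_mul_left h'' hfplU
      have hplUlt : plowU < pstar := by rw [← heq]; exact h4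
      have hfeq : ∀ x ∈ Icc plow plowU, f x = f plow := by
        by_contra hcon
        push_neg at hcon
        obtain ⟨x₀, hx₀, hne⟩ := hcon
        have hx₀lt : f x₀ < f plow :=
          lt_of_le_of_ne (hB plow hplint x₀ hx₀.1) hne
        have hstrictint : (∫ x in plow..pstar, cd' (pstar - x) * f x)
            < ∫ x in plow..pstar, cd' (pstar - x) * f plow := by
          refine intervalIntegral.integral_lt_integral_of_continuousOn_of_le_of_exists_lt h2
            (hcompcont.mul hfc.continuousOn) (hcompcont.mul continuousOn_const) ?_ ?_
          · intro x hx
            exact mul_le_mul_of_nonneg_left (hB plow hplint x hx.1.le)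
              (hcdnonneg x ⟨hx.1.le, hx.2⟩)
          · refine ⟨x₀, ⟨hx₀.1, hx₀.2.trans hplUlt.le⟩, ?_⟩
            have hcdpos : 0 < cd' (pstar - x₀) := by
              have h0 : cd' 0 < cd' (pstar - x₀) :=
                hcd'mono self_mem_Ici (mem_Ici.2 (by linarith [hx₀.2])) (by linarith [hx₀.2])
              rwa [hcd'0] at h0
            exact mul_lt_mul_of_pos_left hx₀lt hcdpos
        have hrhs : (∫ x in plow..pstar, cd' (pstar - x) * f plow) = pstar * f plow := by
          rw [intervalIntegral.integral_mul_const _ _, hIu]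
        rw [hrhs, ← heq1, ← hFOCu] at hstrictint
        exact lt_irrefl _ hstrictint
      have hfplUeq : f plowU = f plow := hfeq plowU ⟨hcase.le, le_refl _⟩
      have hμpos : 0 < μ (Ioo plow plowU) := by
        refine hdenspos plow plowU (f plow) hfpl hcase ?_
        intro x hx
        rw [hfeq x ⟨hx.1.le, hx.2.le⟩]
      have hsurvlt : surv μ plowU < surv μ plow := by
        have hdisj : Disjoint (Ioo plow plowU) (Ici plowU) := by
          rw [Set.disjoint_left]
          intro a ha ha2
          exact absurd ha.2 (not_lt.2 ha2)
        have hmeas : μ (Ici plowU) < μ (Ici plow) := by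
          calc μ (Ici plowU) < μ (Ici plowU) + μ (Ioo plow plowU) :=
                ENNReal.lt_add_right (hfin _) hμpos.ne'
            _ = μ (Ioo plow plowU) + μ (Ici plowU) := add_comm _ _
            _ = μ (Ioo plow plowU ∪ Ici plowU) :=
                (measure_union hdisj measurableSet_Ici).symm
            _ ≤ μ (Ici plow) := by
                refine measure_mono ?_
                rintro a (ha | ha)
                · exact ha.1.le
                · exact le_trans hcase.le ha
        exact (ENNReal.toReal_lt_toReal (hfin _) (hfin _)).2 hmeas
      -- but surv μ plowU = surv μ plow
      have : surv μ plowU = surv μ plow := by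
        rw [← hpUval, heq, hfplUeq, heq1]
      linarith
end
end

section
/- Let p^M ∈ (0,b) satisfy p^M·f(p^M) = F̄(p^M), and let d > 0. Then every maximizer p̂ of the map p ↦ p·F̄(max(p − d, 0)) over p ≥ 0 satisfies p̂ > p^M. (That is, under any positive uniform additive advertising shift d, the monopolist's optimal price strictly exceeds the no-advertising monopoly price, so the ex-ante consumer-optimal uniform plan is no advertising.) -/
open MeasureTheory Set

noncomputable section

/-- Under a strictly increasing hazard rate, for any positive uniform additive advertising
shift `d`, every maximizer of `p ↦ p·F̄(max(p−d,0))` strictly exceeds the no-advertising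
monopoly price `p^M`. -/
theorem stmt10
    (μ : Measure ℝ) (hprob : IsProbabilityMeasure μ)
    (b : EReal)
    (f : ℝ → ℝ) (hfc : Continuous f)
    (hsupp0 : μ (Iio 0) = 0) (hsuppb : μ {x : ℝ | b < (x : EReal)} = 0)
    (hdens : μ = (volume : Measure ℝ).withDensity fun x => ENNReal.ofReal (f x))
    (hfpos : ∀ x : ℝ, 0 < x → (x : EReal) < b → 0 < f x)
    (hhaz : StrictMonoOn (fun x => f x / surv μ x) {x : ℝ | 0 < x ∧ (x : EReal) < b})
    (pM : ℝ) (hpM0 : 0 < pM) (hpMb : (pM : EReal) < b)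
    (hFOC : pM * f pM = surv μ pM)
    (d : ℝ) (hd : 0 < d)
    (phat : ℝ) (hphat0 : 0 ≤ phat)
    (hmax : ∀ p, 0 ≤ p → p * surv μ (max (p - d) 0) ≤ phat * surv μ (max (phat - d) 0)) :
    pM < phat := by
  set g : ℝ → ℝ := fun t => max (f t) 0 with hgdef
  have hgc : Continuous g := hfc.max continuous_const
  have hgnn : ∀ t, 0 ≤ g t := fun t => le_max_right _ _
  have hofReal : ∀ t, ENNReal.ofReal (f t) = ENNReal.ofReal (g t) := by
    intro t
    rcases le_total (f t) 0 with h | h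
    · simp [hgdef, max_eq_right h, ENNReal.ofReal_eq_zero.2 h]
    · simp [hgdef, max_eq_left h]
  set S : ℝ → ℝ := surv μ with hSdef
  have hfin : ∀ s : Set ℝ, μ s ≠ ⊤ := fun s => measure_ne_top μ s
  have hmono : Antitone S := by
    intro x y hxy
    exact ENNReal.toReal_mono (hfin _) (measure_mono (Ici_subset_Ici.2 hxy))
  have hS0 : S 0 = 1 := by
    have h1 : μ (Ici (0:ℝ)) = 1 := by
      have h2 := measure_compl (measurableSet_Iio (a := (0:ℝ))) (hfin _)
      rw [compl_Iio] at h2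
      rw [h2, hsupp0, measure_univ]
      simp
    rw [hSdef]
    simp [surv, h1]
  -- difference of survival values is an interval integral of g
  have hdiff : ∀ x y : ℝ, x ≤ y → S x = (∫ t in x..y, g t) + S y := by
    intro x y hxy
    have hdisj : Disjoint (Ico x y) (Ici y) := by
      rw [Set.disjoint_left]
      intro a ha hb
      exact absurd hb (not_le.2 ha.2)
    have hsplit : μ (Ici x) = μ (Ico x y) + μ (Ici y) := by
      rw [← measure_union hdisj measurableSet_Ici, Ico_union_Ici_eq_Ici hxy]
    have h2 : μ (Ico x y) = ∫⁻ t in Ico x y, ENNReal.ofReal (g t) := by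
      rw [hdens, withDensity_apply _ measurableSet_Ico]
      exact lintegral_congr fun t => hofReal t
    have h3 : ∫ t in Ico x y, g t = (μ (Ico x y)).toReal := by
      rw [integral_eq_lintegral_of_nonneg_ae
          (Filter.Eventually.of_forall fun t => hgnn t) hgc.aestronglyMeasurable.restrict, h2]
    have h4 : ∫ t in x..y, g t = (μ (Ico x y)).toReal := by
      rw [intervalIntegral.integral_of_le hxy, integral_Ioc_eq_integral_Ioo,
        ← integral_Ico_eq_integral_Ioo, h3]
    rw [hSdef]
    simp only [surv]
    rw [hsplit, ENNReal.toReal_add (hfin _) (hfin _), h4]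
  have hrepr : ∀ x : ℝ, S x = S 0 - ∫ t in (0:ℝ)..x, g t := by
    intro x
    rcases le_total 0 x with h | h
    · have h1 := hdiff 0 x h
      linarith
    · have h1 := hdiff x 0 h
      have h2 : ∫ t in (0:ℝ)..x, g t = -∫ t in x..(0:ℝ), g t :=
        intervalIntegral.integral_symm x 0
      rw [h2]
      linarith
  have hSfun : S = fun u => S 0 - ∫ t in (0:ℝ)..u, g t := funext hrepr
  have hSderiv : ∀ x : ℝ, HasDerivAt S (-(g x)) x := by
    intro x
    have h1 : HasDerivAt (fun u => ∫ t in (0:ℝ)..u, g t) (g x) x :=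
      intervalIntegral.integral_hasDerivAt_right (hgc.intervalIntegrable 0 x)
        (hgc.stronglyMeasurableAtFilter _ _) hgc.continuousAt
    have h2 : HasDerivAt (fun u => S 0 - ∫ t in (0:ℝ)..u, g t) (-(g x)) x := by
      simpa using h1.const_sub (S 0)
    rw [hSfun]
    exact h2
  have hScont : Continuous S := by
    rw [continuous_iff_continuousAt]
    exact fun x => (hSderiv x).continuousAt
  have hfpM : 0 < f pM := hfpos pM hpM0 hpMb
  have hSpM : 0 < S pM := by
    rw [← hFOC]
    positivity
  have hhpM : f pM / S pM = 1 / pM := by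
    rw [← hFOC]
    field_simp
  -- key hazard-rate inequality
  have hkey : ∀ q : ℝ, 0 < q → q < pM → pM * f q < S q := by
    intro q hq0 hqpM
    have hqb : (q : EReal) < b := lt_trans (by exact_mod_cast hqpM) hpMb
    have h1 : f q / S q < 1 / pM := by
      have h2 := hhaz ⟨hq0, hqb⟩ ⟨hpM0, hpMb⟩ hqpM
      simp only at h2
      rwa [hhpM] at h2
    have hSq : 0 < S q := lt_of_lt_of_le hSpM (hmono hqpM.le)
    rw [div_lt_div_iff₀ hSq hpM0] at h1
    linarith
  by_contra hcon
  push_neg at hcon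
  rcases lt_or_ge phat d with hpd | hdp
  · -- phat < d : comparing with price d gives a contradiction
    have h1 := hmax d hd.le
    rw [show max (d - d) 0 = 0 by simp, show max (phat - d) 0 = 0 from
      max_eq_right (by linarith), hS0, mul_one, mul_one] at h1
    linarith
  · -- d ≤ phat ≤ pM
    have hdpM : d ≤ pM := le_trans hdp hcon
    set R : ℝ → ℝ := fun p => p * S (p - d) with hRdef
    set D : ℝ → ℝ := fun p => S (p - d) - p * g (p - d) with hDdef
    have hRderiv : ∀ p : ℝ, HasDerivAt R (D p) p := by
      intro p
      have h1 : HasDerivAt (fun u : ℝ => S (u - d)) (-(g (p - d))) p := by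
        have h2 := (hSderiv (p - d)).comp p ((hasDerivAt_id p).sub_const d)
        simpa [Function.comp_def] using h2
      have h3 := (hasDerivAt_id p).mul h1
      have h4 : 1 * S (p - d) + p * -(g (p - d)) = D p := by
        rw [hDdef]; ring
      rw [hRdef]
      rw [← h4]; exact h3
    have hDc : Continuous D := by
      apply Continuous.sub
      · exact hScont.comp (continuous_id.sub continuous_const)
      · exact continuous_id.mul (hgc.comp (continuous_id.sub continuous_const))
    have hDpM : 0 < D pM := by
      rcases eq_or_lt_of_le hdpM with heq | hlt
      · -- d = pM : use the limiting hazard bound at 0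
        have h0 : pM - d = 0 := by rw [← heq]; ring
        set x0 := pM / 2 with hx0def
        have hx00 : 0 < x0 := by positivity
        have hx0pM : x0 < pM := by
          rw [hx0def]; linarith
        have hx0b : (x0 : EReal) < b := lt_trans (by exact_mod_cast hx0pM) hpMb
        set c := f x0 / S x0 with hcdef
        have hSx0 : 0 < S x0 := lt_of_lt_of_le hSpM (hmono hx0pM.le)
        have hcpos : 0 < c := div_pos (hfpos x0 hx00 hx0b) hSx0
        have hclt : c < 1 / pM := by
          have h2 := hhaz ⟨hx00, hx0b⟩ ⟨hpM0, hpMb⟩ hx0pM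
          simp only at h2
          rwa [hhpM] at h2
        have hf0 : f 0 ≤ c := by
          have hev : ∀ᶠ x in nhdsWithin 0 (Ioi 0), f x ≤ c := by
            filter_upwards [Ioo_mem_nhdsGT_of_mem ⟨le_refl (0:ℝ), hx00⟩] with x hx
            have hxb : (x : EReal) < b :=
              lt_trans (by exact_mod_cast (lt_trans hx.2 hx0pM)) hpMb
            have h1 : f x / S x < c := by
              have h2 := hhaz ⟨hx.1, hxb⟩ ⟨hx00, hx0b⟩ hx.2
              simpa using h2
            have hSx : 0 < S x := lt_of_lt_of_le hSpM (hmono (by linarith [hx.2, hx0pM] : x ≤ pM))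
            have hSx1 : S x ≤ 1 := by
              rw [← hS0]; exact hmono hx.1.le
            calc f x = (f x / S x) * S x := by field_simp
              _ ≤ c * 1 := mul_le_mul h1.le hSx1 hSx.le hcpos.le
              _ = c := mul_one c
          exact le_of_tendsto (hfc.continuousAt.continuousWithinAt) hev
        have hg0 : g 0 ≤ c := max_le hf0 hcpos.le
        have hlt1 : pM * g 0 < 1 := by
          calc pM * g 0 ≤ pM * c := mul_le_mul_of_nonneg_left hg0 hpM0.le
            _ < pM * (1 / pM) := by
                exact mul_lt_mul_of_pos_left hclt hpM0
            _ = 1 := by field_simp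
        rw [hDdef]
        simp only [h0, hS0]
        linarith
      · -- d < pM
        have hq0 : 0 < pM - d := by linarith
        have h1 := hkey (pM - d) hq0 (by linarith)
        have hqb : (pM - d : EReal) < b :=
          lt_trans (by exact_mod_cast (by linarith : pM - d < pM)) hpMb
        have hfq : 0 < f (pM - d) := hfpos _ hq0 hqb
        have hgq : g (pM - d) = f (pM - d) := max_eq_left hfq.le
        rw [hDdef]
        simp only [hgq]
        linarith
    -- find a small ball around pM where D is positive
    have hev : ∀ᶠ p in nhds pM, 0 < D p :=
      (hDc.tendsto pM).eventually (eventually_gt_nhds hDpM)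
    obtain ⟨ε, hε0, hball⟩ := Metric.eventually_nhds_iff_ball.1 hev
    set P := pM + ε / 2 with hPdef
    have hdP : d < P := by
      rw [hPdef]; linarith
    have hsm : StrictMonoOn R (Icc d P) := by
      apply strictMonoOn_of_deriv_pos (convex_Icc d P)
      · exact (continuous_id.mul (hScont.comp (continuous_id.sub continuous_const))).continuousOn
      · intro x hx
        rw [interior_Icc] at hx
        rw [(hRderiv x).deriv]
        rcases lt_or_ge x pM with hxp | hxp
        · have hq0 : 0 < x - d := by linarith [hx.1]
          have h1 := hkey (x - d) hq0 (by linarith)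
          have hqb : (x - d : EReal) < b :=
            lt_trans (by exact_mod_cast (by linarith : x - d < pM)) hpMb
          have hfq : 0 < f (x - d) := hfpos _ hq0 hqb
          have hgq : g (x - d) = f (x - d) := max_eq_left hfq.le
          have h2 : x * f (x - d) < pM * f (x - d) := mul_lt_mul_of_pos_right hxp hfq
          rw [hDdef]
          simp only [hgq]
          linarith
        · apply hball
          rw [Metric.mem_ball, Real.dist_eq, abs_of_nonneg (by linarith)]
          have hxP : x < P := hx.2
          rw [hPdef] at hxP
          linarith
    have hphatI : phat ∈ Icc d P := ⟨hdp, by rw [hPdef]; linarith⟩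
    have hPI : P ∈ Icc d P := ⟨hdP.le, le_refl P⟩
    have hlt : R phat < R P := hsm hphatI hPI (by rw [hPdef]; linarith)
    have h2 := hmax P (by rw [hPdef]; linarith)
    rw [show max (P - d) 0 = P - d from max_eq_left (by rw [hPdef]; linarith),
      show max (phat - d) 0 = phat - d from max_eq_left (by linarith)] at h2
    exact absurd h2 (not_le.2 hlt)
end
end

section
/- If 0 ≤ p̲ < p* < p^M, p*·F̄(p̲) = p^M·F̄(p^M), and μ((p̲, p^M)) > 0, then ∫_{[p̲,∞)} (x − p*) dμ(x) > ∫_{[p^M,∞)} (x − p^M) dμ(x). (That is, the ex-ante consumer-optimal targeted advertising plan delivers strictly more ex-ante consumer surplus than no advertising.) -/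
open MeasureTheory Set

noncomputable section

/-- The ex-ante consumer-optimal targeted plan (price `p* < p^M`, purchase set `[p̲,∞)`,
with the binding upward-deviation constraint `p*·F̄(p̲) = p^M·F̄(p^M)`) delivers strictly
more ex-ante consumer surplus than no advertising, provided `μ((p̲,p^M)) > 0`. -/
theorem stmt11
    (μ : Measure ℝ) (hprob : IsProbabilityMeasure μ) (hnn : μ (Iio 0) = 0)
    (hmean : Integrable id μ)
    (plow pstar pM : ℝ)
    (h0 : 0 ≤ plow) (h1 : plow < pstar) (h2 : pstar < pM)
    (hbind : pstar * surv μ plow = pM * surv μ pM)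
    (hmass : 0 < μ (Ioo plow pM)) :
    (∫ x in Ici pM, (x - pM) ∂μ) < ∫ x in Ici plow, (x - pstar) ∂μ := by
  have hlM : plow ≤ pM := le_of_lt (h1.trans h2)
  -- integrability
  have hid : ∀ s : Set ℝ, IntegrableOn (fun x => x) s μ :=
    fun s => hmean.restrict (s := s)
  have hsub : ∀ (c : ℝ) (s : Set ℝ), IntegrableOn (fun x => x - c) s μ :=
    fun c s => (hid s).sub (integrableOn_const (measure_ne_top _ _))
  -- split the measure
  have hunion : Ico plow pM ∪ Ici pM = Ici plow := Ico_union_Ici_eq_Ici hlM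
  have hdisj : Disjoint (Ico plow pM) (Ici pM) := by
    apply Set.disjoint_left.2
    intro x hx hx'
    exact absurd hx' (not_le.2 hx.2)
  have hμsplit : μ (Ici plow) = μ (Ico plow pM) + μ (Ici pM) := by
    rw [← hunion, measure_union hdisj measurableSet_Ici]
  set a := (μ (Ico plow pM)).toReal with ha
  set b := (μ (Ici pM)).toReal with hb
  have hsurvM : surv μ pM = b := rfl
  have hsurvl : surv μ plow = a + b := by
    rw [surv, hμsplit, ENNReal.toReal_add (measure_ne_top _ _) (measure_ne_top _ _)]
  -- integrals with constants
  have hconst : ∀ (c : ℝ) (s : Set ℝ),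
      (∫ x in s, (x - c) ∂μ) = (∫ x in s, x ∂μ) - c * (μ s).toReal := by
    intro c s
    rw [integral_sub (hid s) (integrableOn_const (measure_ne_top _ _))]
    simp [mul_comm, Measure.real]
  -- split integral over Ici plow
  have hintsplit : (∫ x in Ici plow, (x - pstar) ∂μ)
      = (∫ x in Ico plow pM, (x - pstar) ∂μ) + ∫ x in Ici pM, (x - pstar) ∂μ := by
    rw [← hunion, setIntegral_union hdisj measurableSet_Ici (hsub _ _) (hsub _ _)]
  -- positivity of ∫ over Ico plow pM of x
  have hpos : 0 < ∫ x in Ioo plow pM, x ∂μ := by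
    rw [setIntegral_pos_iff_support_of_nonneg_ae]
    · have : Ioo plow pM ⊆ Function.support (fun x : ℝ => x) := by
        intro x hx
        exact ne_of_gt (lt_of_le_of_lt h0 hx.1)
      rwa [Set.inter_eq_right.2 this]
    · refine (ae_restrict_iff' measurableSet_Ioo).2 (ae_of_all _ ?_)
      intro x hx
      exact le_of_lt (lt_of_le_of_lt h0 hx.1)
    · exact hid _
  have hIco : (∫ x in Ioo plow pM, x ∂μ) ≤ ∫ x in Ico plow pM, x ∂μ := by
    apply setIntegral_mono_set (hid _)
    · refine (ae_restrict_iff' measurableSet_Ico).2 (ae_of_all _ ?_)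
      intro x hx
      exact le_trans h0 hx.1
    · exact HasSubset.Subset.eventuallyLE Ioo_subset_Ico_self
  -- binding constraint in real form
  have hbind' : pstar * (a + b) = pM * b := by rw [← hsurvl, ← hsurvM]; exact hbind
  rw [hintsplit, hconst, hconst, hconst]
  have hIapos : 0 < ∫ x in Ico plow pM, x ∂μ := lt_of_lt_of_le hpos hIco
  nlinarith [hIapos, hbind']
end
end

section
/- Let d ≥ 0 satisfy c_d′(d) = 1. Then: (a) for all x ≥ 0 and all y ≥ x, y − c_d(y − x) ≤ x + d − c_d(d); (b) for every Borel probability measure π on [0,∞)² with first marginal μ, π({(x,y) : y ≥ x}) = 1, and ∫ y dπ < ∞, one has ∫ ( y − c_d(y − x) ) dπ(x,y) ≤ ∫ x dμ(x) + d − c_d(d), with equality for the plan induced by the map x ↦ x + d. (This bounds the total ex-post surplus after advertising net of advertising cost, and shows it is attained by shifting every consumer's valuation by exactly d.) -/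
open MeasureTheory Set

noncomputable section

/-- For `d` with `c_d′(d) = 1`: (a) the pointwise bound
`y − c_d(y−x) ≤ x + d − c_d(d)` for `y ≥ x ≥ 0`; (b) total ex-post surplus net of
advertising cost of any forward plan is at most `∫x dμ + d − c_d(d)`, with equality for
the plan shifting every valuation by exactly `d`. -/
theorem stmt12
    (μ : Measure ℝ) (hprob : IsProbabilityMeasure μ) (hnn : μ (Iio 0) = 0)
    (hmean : Integrable id μ)
    (cd cd' : ℝ → ℝ) (hcdnn : ∀ t, 0 ≤ t → 0 ≤ cd t) (hcd0 : cd 0 = 0)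
    (hconv : ConvexOn ℝ (Ici 0) cd)
    (hderiv : ∀ t, 0 ≤ t → HasDerivWithinAt cd (cd' t) (Ici 0) t)
    (hcd'0 : cd' 0 = 0)
    (d : ℝ) (hd : 0 ≤ d) (hcd'd : cd' d = 1) :
    (∀ x, 0 ≤ x → ∀ y, x ≤ y → y - cd (y - x) ≤ x + d - cd d) ∧
    (∀ π : Measure (ℝ × ℝ), IsProbabilityMeasure π → π.map Prod.fst = μ →
      π {q : ℝ × ℝ | q.1 ≤ q.2} = 1 → Integrable (fun q : ℝ × ℝ => q.2) π →
      (∫ q : ℝ × ℝ, (q.2 - cd (q.2 - q.1)) ∂π) ≤ (∫ x, x ∂μ) + d - cd d) ∧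
    (∫ q : ℝ × ℝ, (q.2 - cd (q.2 - q.1)) ∂(μ.map fun x => (x, x + d)))
      = (∫ x, x ∂μ) + d - cd d := by
  -- Scalar key lemma: t - cd t ≤ d - cd d for t ≥ 0
  have key : ∀ t, 0 ≤ t → t - cd t ≤ d - cd d := by
    intro t ht
    rcases lt_trichotomy t d with h | h | h
    · have hs : slope cd t d ≤ cd' d :=
        hconv.slope_le_of_hasDerivWithinAt ht hd h (hderiv d hd)
      rw [slope_def_field, hcd'd, div_le_one (by linarith)] at hs
      linarith
    · simp [h]
    · have hs : cd' d ≤ slope cd d t :=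
        hconv.le_slope_of_hasDerivWithinAt hd ht h (hderiv d hd)
      rw [slope_def_field, hcd'd, le_div_iff₀ (by linarith)] at hs
      linarith
  have hpt : ∀ x, 0 ≤ x → ∀ y, x ≤ y → y - cd (y - x) ≤ x + d - cd d := by
    intro x hx y hxy
    have := key (y - x) (by linarith)
    linarith
  have hdc : 0 ≤ d - cd d := by
    have := key 0 le_rfl
    simp [hcd0] at this
    linarith
  -- ∫ x dμ ≥ 0
  have hμae : ∀ᵐ x ∂μ, 0 ≤ x := by
    rw [ae_iff]
    convert hnn using 2
    ext x; simp [Iio]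
  have hmean_nn : 0 ≤ ∫ x, x ∂μ := integral_nonneg_of_ae hμae
  refine ⟨hpt, ?_, ?_⟩
  · intro π hπ hmap hfwd hint2
    have hS : MeasurableSet {q : ℝ × ℝ | q.1 ≤ q.2} :=
      measurableSet_le measurable_fst measurable_snd
    have hae1 : ∀ᵐ q ∂π, q.1 ≤ q.2 := by
      have hcompl : π ({q : ℝ × ℝ | q.1 ≤ q.2}ᶜ) = 0 := by
        rw [measure_compl hS (measure_ne_top π _), hfwd, measure_univ]
        simp
      rw [ae_iff]
      exact hcompl
    have hae0 : ∀ᵐ q ∂π, 0 ≤ q.1 := by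
      rw [ae_iff]
      have : π (Prod.fst ⁻¹' Iio (0:ℝ)) = 0 := by
        rw [← Measure.map_apply measurable_fst measurableSet_Iio, hmap]
        exact hnn
      convert this using 2
      ext q; simp
    have hint1 : Integrable (fun q : ℝ × ℝ => q.1) π := by
      refine hint2.mono measurable_fst.aestronglyMeasurable ?_
      filter_upwards [hae0, hae1] with q h0 h1
      simp only [Real.norm_eq_abs]
      rw [abs_of_nonneg h0, abs_of_nonneg (le_trans h0 h1)]
      exact h1
    have hμπ : ∫ x, x ∂μ = ∫ q : ℝ × ℝ, q.1 ∂π := by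
      rw [← hmap]
      exact integral_map measurable_fst.aemeasurable
        measurable_id.aestronglyMeasurable
    by_cases hfi : Integrable (fun q : ℝ × ℝ => q.2 - cd (q.2 - q.1)) π
    · have hmono : (∫ q : ℝ × ℝ, (q.2 - cd (q.2 - q.1)) ∂π)
          ≤ ∫ q : ℝ × ℝ, (q.1 + (d - cd d)) ∂π := by
        refine integral_mono_ae hfi (hint1.add (integrable_const _)) ?_
        filter_upwards [hae0, hae1] with q h0 h1
        have := hpt q.1 h0 q.2 h1
        linarith
      rw [integral_add hint1 (integrable_const _), integral_const] at hmono
      simp [measure_univ] at hmono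
      rw [hμπ]
      linarith
    · rw [integral_undef hfi]
      linarith
  · -- equality for the shift plan
    have hmean' : Integrable (fun x : ℝ => x) μ := hmean
    have hT : Measurable (fun x : ℝ => (x, x + d)) :=
      measurable_id.prodMk (measurable_id.add_const d)
    have hE : MeasurableSet {q : ℝ × ℝ | q.2 - q.1 = d} :=
      (measurable_snd.sub measurable_fst) (measurableSet_singleton d)
    have haeE : ∀ᵐ q ∂(μ.map fun x : ℝ => (x, x + d)), q.2 - q.1 = d := by
      rw [ae_iff, Measure.map_apply hT]
      · convert measure_empty (μ := μ) using 2
        ext x; simp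
      · exact hE.compl
    have hcongr : (∫ q : ℝ × ℝ, (q.2 - cd (q.2 - q.1)) ∂(μ.map fun x : ℝ => (x, x + d)))
        = ∫ q : ℝ × ℝ, (q.2 - cd d) ∂(μ.map fun x : ℝ => (x, x + d)) := by
      refine integral_congr_ae ?_
      filter_upwards [haeE] with q hq
      rw [hq]
    rw [hcongr, integral_map hT.aemeasurable (f := fun q : ℝ × ℝ => q.2 - cd d)
      (measurable_snd.sub measurable_const).aestronglyMeasurable]
    have h1 : (∫ x, ((fun x : ℝ => (x, x + d)) x).2 - cd d ∂μ)
        = ∫ x, (x + (d - cd d)) ∂μ := by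
      congr 1; ext x; simp; ring
    rw [h1, integral_add hmean' (integrable_const _), integral_const]
    simp [measure_univ]
    ring
end
end

section
/- Let (ν_n) be Borel probability measures on [0,∞) converging weakly to ν, and let p_n → p in [0,∞). Suppose that, for every n and every p′ ≥ 0, p′·ν_n([p′,∞)) ≤ p_n·ν_n([p_n,∞)). Then p′·ν([p′,∞)) ≤ p·ν([p,∞)) for every p′ ≥ 0. (The graph of the correspondence mapping a price to the set of demand distributions under which it is optimal is closed under weak convergence.) -/
open MeasureTheory Set Filter
open scoped ENNReal NNReal Topology

noncomputable section

set_option maxHeartbeats 1000000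


/-- From a liminf lower bound in `ℝ≥0∞`, an eventual real lower bound up to `ε`. -/
lemma ev_liminf (b : ℕ → ℝ≥0∞) (c : ℝ≥0∞) (hc : c ≠ ⊤) (hb : ∀ n, b n ≠ ⊤)
    (h : c ≤ Filter.liminf b atTop) {ε : ℝ} (hε : 0 < ε) :
    ∀ᶠ n in atTop, c.toReal - ε ≤ (b n).toReal := by
  by_cases hce : c ≤ ENNReal.ofReal ε
  · refine Filter.Eventually.of_forall fun n => ?_
    have : c.toReal ≤ ε := by
      have := ENNReal.toReal_mono ENNReal.ofReal_ne_top hce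
      rwa [ENNReal.toReal_ofReal hε.le] at this
    have := ENNReal.toReal_nonneg (a := b n)
    linarith
  · push_neg at hce
    have hc0 : c ≠ 0 := by
      intro h0; rw [h0] at hce; exact (not_lt.2 zero_le) hce
    have hlt : c - ENNReal.ofReal ε < Filter.liminf b atTop :=
      lt_of_lt_of_le (ENNReal.sub_lt_self hc hc0 (by simp [hε, hε.ne'])) h
    filter_upwards [Filter.eventually_lt_of_lt_liminf hlt] with n hn
    have h1 := ENNReal.toReal_mono (hb n) hn.le
    have h2 : (c - ENNReal.ofReal ε).toReal = c.toReal - ε := by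
      rw [ENNReal.toReal_sub_of_le hce.le hc, ENNReal.toReal_ofReal hε.le]
    linarith

/-- From a limsup upper bound in `ℝ≥0∞`, an eventual real upper bound up to `ε`. -/
lemma ev_limsup (b : ℕ → ℝ≥0∞) (c : ℝ≥0∞) (hc : c ≠ ⊤)
    (h : Filter.limsup b atTop ≤ c) {ε : ℝ} (hε : 0 < ε) :
    ∀ᶠ n in atTop, (b n).toReal ≤ c.toReal + ε := by
  have hlt : Filter.limsup b atTop < c + ENNReal.ofReal ε :=
    lt_of_le_of_lt h (ENNReal.lt_add_right hc (by simp [hε, hε.ne']))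
  filter_upwards [Filter.eventually_lt_of_limsup_lt hlt] with n hn
  have : (b n).toReal ≤ (c + ENNReal.ofReal ε).toReal :=
    ENNReal.toReal_mono (by finiteness) hn.le
  rwa [ENNReal.toReal_add hc ENNReal.ofReal_ne_top, ENNReal.toReal_ofReal hε.le] at this

/-- The graph of the correspondence mapping a price to the set of demand distributions
under which it is optimal is closed under weak convergence. -/
theorem stmt16
    (ν : ℕ → Measure ℝ) (νlim : Measure ℝ)
    (hprob : ∀ n, IsProbabilityMeasure (ν n)) (hlimprob : IsProbabilityMeasure νlim)
    (hnn : ∀ n, ν n (Iio 0) = 0) (hlimnn : νlim (Iio 0) = 0)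
    (hweak : ∀ g : BoundedContinuousFunction ℝ ℝ,
      Tendsto (fun n => ∫ x, g x ∂(ν n)) atTop (nhds (∫ x, g x ∂νlim)))
    (pseq : ℕ → ℝ) (p : ℝ) (hpseq : ∀ n, 0 ≤ pseq n)
    (hp : Tendsto pseq atTop (nhds p))
    (hopt : ∀ n, ∀ p', 0 ≤ p' → p' * surv (ν n) p' ≤ pseq n * surv (ν n) (pseq n)) :
    ∀ p', 0 ≤ p' → p' * surv νlim p' ≤ p * surv νlim p := by
  -- package as probability measures
  have hpnonneg : 0 ≤ p := ge_of_tendsto' hp hpseq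
  set μs : ℕ → ProbabilityMeasure ℝ := fun n => ⟨ν n, hprob n⟩ with hμs
  set μ : ProbabilityMeasure ℝ := ⟨νlim, hlimprob⟩ with hμ
  have htend : Tendsto μs atTop (𝓝 μ) := by
    rw [ProbabilityMeasure.tendsto_iff_forall_integral_tendsto]
    exact hweak
  have hclosed : ∀ F : Set ℝ, IsClosed F →
      Filter.limsup (fun n => ν n F) atTop ≤ νlim F := fun F hF =>
    ProbabilityMeasure.limsup_measure_closed_le_of_tendsto htend hF
  have hopen : ∀ G : Set ℝ, IsOpen G →
      νlim G ≤ Filter.liminf (fun n => ν n G) atTop := fun G hG =>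
    ProbabilityMeasure.le_liminf_measure_open_of_tendsto htend hG
  intro p' hp'
  -- nonnegativity of survivals
  have hsurv_nonneg : ∀ (m : Measure ℝ) (x : ℝ), 0 ≤ surv m x := fun m x =>
    ENNReal.toReal_nonneg
  have hsurv_le_one : ∀ n x, surv (ν n) x ≤ 1 := by
    intro n x
    have := prob_le_one (μ := ν n) (s := Ici x)
    have h2 := ENNReal.toReal_mono (by finiteness) this
    simpa [surv] using h2
  rcases eq_or_lt_of_le hp' with rfl | hp'pos
  · simpa using mul_nonneg hpnonneg (hsurv_nonneg νlim p)
  -- suffices an ε-approximate bound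
  refine le_of_forall_pos_le_add ?_
  intro ε hε
  -- choose q < p'
  set q : ℝ := p' - min (ε / 4) (p' / 2) with hqdef
  have hminpos : 0 < min (ε / 4) (p' / 2) := lt_min (by linarith) (by linarith)
  have hq0 : 0 ≤ q := by
    have := min_le_right (ε / 4) (p' / 2); simp only [hqdef]; linarith
  have hqlt : q < p' := by simp only [hqdef]; linarith
  have hqdiff : p' - q ≤ ε / 4 := by
    have := min_le_left (ε / 4) (p' / 2); simp only [hqdef]; linarith
  clear_value q
  -- choose δ via continuity from above
  have hiInter : (⋂ k : ℕ, Ici (p - 1 / (k + 1))) = Ici p := by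
    ext x
    simp only [mem_iInter, mem_Ici]
    constructor
    · intro hx
      have h0 : p - x ≤ (0 : ℝ) :=
        ge_of_tendsto' tendsto_one_div_add_atTop_nhds_zero_nat (fun k => by
          have := hx k; push_cast; linarith [hx k])
      linarith
    · intro hx k
      have : (0 : ℝ) < 1 / ((k : ℝ) + 1) := by positivity
      linarith
  have hmeas : Tendsto (fun k : ℕ => νlim (Ici (p - 1 / (k + 1)))) atTop
      (𝓝 (νlim (Ici p))) := by
    have := tendsto_measure_iInter_atTop (μ := νlim)
      (s := fun k : ℕ => Ici (p - 1 / (k + 1)))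
      (fun k => (measurableSet_Ici).nullMeasurableSet)
      (fun i j hij => Ici_subset_Ici.2 (by
        have hij' : (i : ℝ) ≤ (j : ℝ) := Nat.cast_le.mpr hij
        have : 1 / ((j : ℝ) + 1) ≤ 1 / ((i : ℝ) + 1) := by
          apply one_div_le_one_div_of_le (by positivity)
          linarith
        linarith))
      ⟨0, by finiteness⟩
    rwa [hiInter] at this
  have hrealtend : Tendsto
      (fun k : ℕ => (p + 1 / (k + 1)) * (νlim (Ici (p - 1 / (k + 1)))).toReal) atTop
      (𝓝 (p * surv νlim p)) := by
    apply Filter.Tendsto.mul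
    · have : Tendsto (fun k : ℕ => p + 1 / ((k : ℝ) + 1)) atTop (𝓝 (p + 0)) :=
        tendsto_const_nhds.add tendsto_one_div_add_atTop_nhds_zero_nat
      simpa using this
    · exact (ENNReal.tendsto_toReal (by finiteness)).comp hmeas
  have hev : ∀ᶠ k : ℕ in atTop,
      (p + 1 / (k + 1)) * (νlim (Ici (p - 1 / (k + 1)))).toReal < p * surv νlim p + ε / 4 :=
    hrealtend.eventually_lt_const (by linarith)
  obtain ⟨k, hk⟩ := hev.exists
  set δ : ℝ := 1 / ((k : ℝ) + 1) with hδdef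
  have hδpos : 0 < δ := by positivity
  set D : ℝ := p' + p + δ + 1 with hDdef
  have hDpos : 0 < D := by simp only [hDdef]; linarith
  set ε' : ℝ := (ε / 4) / D with hε'def
  have hε'pos : 0 < ε' := by positivity
  clear_value δ D ε'
  have hε'1 : p' * ε' ≤ ε / 4 := by
    have heq : p' * ε' = (p' * (ε / 4)) / D := by rw [hε'def]; ring
    rw [heq, div_le_iff₀ hDpos]
    nlinarith
  have hε'2 : (p + δ) * ε' ≤ ε / 4 := by
    have heq : (p + δ) * ε' = ((p + δ) * (ε / 4)) / D := by rw [hε'def]; ring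
    rw [heq, div_le_iff₀ hDpos]
    nlinarith
  have hev1 := ev_liminf (fun n => ν n (Ioi q)) (νlim (Ioi q)) (by finiteness)
    (fun n => by finiteness) (hopen _ isOpen_Ioi) hε'pos
  have hev2 := ev_limsup (fun n => ν n (Ici (p - δ))) (νlim (Ici (p - δ)))
    (by finiteness) (hclosed _ isClosed_Ici) hε'pos
  have hev3 : ∀ᶠ n in atTop, pseq n ∈ Ioo (p - δ) (p + δ) :=
    hp.eventually (Ioo_mem_nhds (by linarith) (by linarith))
  obtain ⟨n, h1, h2, h3⟩ := (hev1.and (hev2.and hev3)).exists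
  -- measure monotonicity facts
  have m1 : (νlim (Ici p')).toReal ≤ (νlim (Ioi q)).toReal :=
    ENNReal.toReal_mono (by finiteness)
      (measure_mono fun x hx => lt_of_lt_of_le hqlt hx)
  have m2 : (ν n (Ioi q)).toReal ≤ (ν n (Ici q)).toReal :=
    ENNReal.toReal_mono (by finiteness) (measure_mono Ioi_subset_Ici_self)
  have m3 : (ν n (Ici q)).toReal ≤ 1 := hsurv_le_one n q
  have m3' : (0:ℝ) ≤ (ν n (Ici q)).toReal := ENNReal.toReal_nonneg
  have hopt' := hopt n q hq0
  unfold surv at hopt'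
  have m4 : (ν n (Ici (pseq n))).toReal ≤ (ν n (Ici (p - δ))).toReal :=
    ENNReal.toReal_mono (by finiteness)
      (measure_mono (Ici_subset_Ici.2 h3.1.le))
  have m5 : pseq n * (ν n (Ici (pseq n))).toReal
      ≤ (p + δ) * (ν n (Ici (p - δ))).toReal :=
    mul_le_mul h3.2.le m4 ENNReal.toReal_nonneg (by linarith)
  have hsurveq : surv νlim p' = (νlim (Ici p')).toReal := rfl
  have hsurvgoal : p * surv νlim p + ε / 4
      > (p + δ) * (νlim (Ici (p - δ))).toReal := hk
  -- assemble
  have s1 : p' * (νlim (Ici p')).toReal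
      ≤ p' * (ν n (Ici q)).toReal + p' * ε' := by
    have hc : (νlim (Ici p')).toReal ≤ (ν n (Ici q)).toReal + ε' := by
      have := h1
      linarith [m2]
    nlinarith [mul_le_mul_of_nonneg_left hc hp']
  have s2 : (p' - q) * (ν n (Ici q)).toReal ≤ p' - q :=
    by nlinarith [mul_le_mul_of_nonneg_left m3 (show (0:ℝ) ≤ p' - q by linarith)]
  have s3 : (p + δ) * (ν n (Ici (p - δ))).toReal
      ≤ (p + δ) * (νlim (Ici (p - δ))).toReal + (p + δ) * ε' := by
    have := h2
    nlinarith [mul_le_mul_of_nonneg_left this (show (0:ℝ) ≤ p + δ by linarith)]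
  rw [hsurveq]
  nlinarith [s1, s2, s3, hopt', m5, hε'1, hε'2, hqdiff, hsurvgoal]
end
end

section
/- For every a > 0, setting p = (1 + 8a)/(16a) and s = √(p/a), one has 1 − p/(s + 1) − 2a·( s − ln(s + 1) ) > 0. (Consequently, when initial valuations are uniform on [0,1] and the multiplicative advertising cost is ψ(t) = a(t−1)², the price p* under producer-optimal targeted advertising strictly exceeds the price p^D = (1+8a)/(16a) under producer-optimal multiplicative uniform advertising, which in turn exceeds the no-advertising monopoly price 1/2.) -/
lemma log_ge_pade (s : ℝ) (hs : 0 ≤ s) : 2 * s / (s + 2) ≤ Real.log (1 + s) := by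
  have mono : MonotoneOn (fun x : ℝ => Real.log (1 + x) - 2 * x / (x + 2)) (Set.Ici 0) := by
    apply monotoneOn_of_hasDerivWithinAt_nonneg (convex_Ici 0)
      (f' := fun x => 1 / (1 + x) - 4 / (x + 2) ^ 2)
    · apply ContinuousOn.sub
      · apply ContinuousOn.log (by fun_prop)
        intro x hx
        simp only [Set.mem_Ici] at hx
        nlinarith
      · apply ContinuousOn.div (by fun_prop) (by fun_prop)
        intro x hx
        simp only [Set.mem_Ici] at hx
        nlinarith
    · intro x hx
      rw [interior_Ici] at hx
      simp only [Set.mem_Ioi] at hx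
      have h1 : (0:ℝ) < 1 + x := by linarith
      have h2 : (0:ℝ) < x + 2 := by linarith
      have hd : HasDerivAt (fun x : ℝ => Real.log (1 + x) - 2 * x / (x + 2))
          (1 / (1 + x) - 4 / (x + 2) ^ 2) x := by
        have hlog : HasDerivAt (fun x : ℝ => Real.log (1 + x)) (1 / (1 + x)) x := by
          have : HasDerivAt (fun x : ℝ => 1 + x) 1 x := by
            simpa using (hasDerivAt_id x).const_add 1
          simpa using this.log h1.ne'
        have hrat : HasDerivAt (fun x : ℝ => 2 * x / (x + 2)) (4 / (x + 2) ^ 2) x := by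
          have hn : HasDerivAt (fun x : ℝ => 2 * x) 2 x := by
            simpa using (hasDerivAt_id x).const_mul 2
          have hdd : HasDerivAt (fun x : ℝ => x + 2) 1 x := by
            simpa using (hasDerivAt_id x).add_const 2
          have : HasDerivAt (fun x : ℝ => 2 * x / (x + 2)) ((2 * (x + 2) - 2 * x * 1) / (x + 2) ^ 2) x := hn.div hdd h2.ne'
          convert this using 1
          ring
        exact hlog.sub hrat
      exact hd.hasDerivWithinAt
    · intro x hx
      rw [interior_Ici] at hx
      simp only [Set.mem_Ioi] at hx
      have h1 : (0:ℝ) < 1 + x := by linarith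
      have h2 : (0:ℝ) < x + 2 := by linarith
      rw [sub_nonneg, div_le_div_iff₀ (by positivity) h1]
      nlinarith [sq_nonneg x]
  have h0 : (0:ℝ) ∈ Set.Ici (0:ℝ) := Set.self_mem_Ici
  have := mono h0 (Set.mem_Ici.2 hs) hs
  simp only [Real.log_one, add_zero, zero_div, mul_zero, zero_add] at this
  linarith [this]

/-- For every `a > 0`, with `p = (1+8a)/(16a)` and `s = √(p/a)`, one has
`1 − p/(s+1) − 2a(s − log(s+1)) > 0`; this is `G(p^D) > 0` in the comparison with
Dixit–Norman multiplicative uniform advertising, implying `p^D < p*`. -/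
theorem stmt19 (a : ℝ) (ha : 0 < a) :
    0 < 1 - ((1 + 8 * a) / (16 * a)) / (Real.sqrt (((1 + 8 * a) / (16 * a)) / a) + 1)
        - 2 * a * (Real.sqrt (((1 + 8 * a) / (16 * a)) / a)
            - Real.log (Real.sqrt (((1 + 8 * a) / (16 * a)) / a) + 1)) := by
  set p : ℝ := (1 + 8 * a) / (16 * a) with hp_def
  have hp : 0 < p := div_pos (by linarith) (by linarith)
  set s : ℝ := Real.sqrt (p / a) with hs_def
  have hpa : 0 < p / a := div_pos hp ha
  have hs : 0 < s := Real.sqrt_pos.2 hpa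
  have hs2 : s ^ 2 = p / a := Real.sq_sqrt hpa.le
  have hps : a * s ^ 2 = p := by rw [hs2]; field_simp
  have h16 : 16 * (a * s) ^ 2 = 1 + 8 * a := by
    have h : 16 * (a * s) ^ 2 = 16 * a * (a * s ^ 2) := by ring
    rw [h, hps, hp_def]
    field_simp
  have hq : 1 < 4 * (a * s) := by nlinarith [mul_pos ha hs]
  have hlog : 2 * s / (s + 2) ≤ Real.log (s + 1) := by
    have := log_ge_pade s hs.le
    rwa [add_comm 1 s] at this
  have h1 : (0:ℝ) < s + 1 := by linarith
  have h2 : (0:ℝ) < s + 2 := by linarith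
  have hkey : s - Real.log (s + 1) ≤ s ^ 2 / (s + 2) := by
    have heq : s - 2 * s / (s + 2) = s ^ 2 / (s + 2) := by
      field_simp
      ring
    linarith
  have hnum : 0 < (s + 1) * (s + 2) - a * s ^ 2 * (3 * s + 4) := by
    nlinarith [mul_pos ha hs, mul_pos hs hs, mul_pos (mul_pos ha hs) hs]
  have hfin : 0 < 1 - a * s ^ 2 / (s + 1) - 2 * a * (s ^ 2 / (s + 2)) := by
    have expand : 1 - a * s ^ 2 / (s + 1) - 2 * a * (s ^ 2 / (s + 2))
        = ((s + 1) * (s + 2) - a * s ^ 2 * (3 * s + 4)) / ((s + 1) * (s + 2)) := by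
      field_simp
      ring
    rw [expand]
    positivity
  have hmul : 2 * a * (s - Real.log (s + 1)) ≤ 2 * a * (s ^ 2 / (s + 2)) :=
    mul_le_mul_of_nonneg_left hkey (by linarith)
  rw [← hps]
  linarith
end
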